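/- Let (v, ṽ) be second-order swap-invariant with Cov(v) = Cov(ṽ) = Σ and Cov(v, ṽ) = Σ − diag(s), and let u = vW, ũ = ṽW for W ∈ ℝ^{d×m}. Then the pair (u, ũ) is second-order swap-invariant (its first two moments are invariant under swapping coordinate subsets) if and only if the off-diagonal entries of Wᵀ diag(s) W vanish, i.e., Wᵀ diag(s) W is a diagonal matrix. -/

import Mathlib

open MeasureTheory Matrix

/-- The (cross-)covariance matrix of two random vectors. -/
noncomputable def covMatrix {Ω : Type*} [MeasurableSpace Ω] (μ : Measure Ω)
    {n m : ℕ} (X : Ω → Fin n → ℝ) (Y : Ω → Fin m → ℝ) : Matrix (Fin n) (Fin m) ℝ :=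
  fun i j => ∫ ω, (X ω i - ∫ ω', X ω' i ∂μ) * (Y ω j - ∫ ω', Y ω' j ∂μ) ∂μ

/-- Second-order swap-invariance of a pair of random vectors: the mean vector and covariance
matrix of the concatenation are invariant under swapping any subset of corresponding
coordinates. -/
def SwapInv2 {Ω : Type*} [MeasurableSpace Ω] (μ : Measure Ω) {n : ℕ}
    (x y : Ω → Fin n → ℝ) : Prop :=
  ∀ S : Finset (Fin n),
    (∀ i, ∫ ω, (if i ∈ S then y ω i else x ω i) ∂μ = ∫ ω, x ω i ∂μ) ∧
    (∀ i, ∫ ω, (if i ∈ S then x ω i else y ω i) ∂μ = ∫ ω, y ω i ∂μ) ∧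
    covMatrix μ (fun ω i => if i ∈ S then y ω i else x ω i)
        (fun ω i => if i ∈ S then y ω i else x ω i) = covMatrix μ x x ∧
    covMatrix μ (fun ω i => if i ∈ S then y ω i else x ω i)
        (fun ω i => if i ∈ S then x ω i else y ω i) = covMatrix μ x y ∧
    covMatrix μ (fun ω i => if i ∈ S then x ω i else y ω i)
        (fun ω i => if i ∈ S then y ω i else x ω i) = covMatrix μ y x ∧
    covMatrix μ (fun ω i => if i ∈ S then x ω i else y ω i)
        (fun ω i => if i ∈ S then x ω i else y ω i) = covMatrix μ y y

/-!
Covariances transform as `Cov(X A, Y B) = Aᵀ Cov(X, Y) B`, so `(vW, ṽW)` has the same moment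
structure as `(v, ṽ)`, with common covariance `Wᵀ Σ W` and `diag(s)` replaced by `Wᵀ diag(s) W`.
For a pair with equal means, marginal covariances `C` and cross-covariances `C - D`, swapping a
set `S` of coordinates leaves the entries `(j, k)` with `j, k` on the same side of `S` unchanged
and replaces the others by the corresponding cross-covariance entries, so swap-invariance holds
exactly when `D` vanishes off the diagonal.
-/

section Covariance

variable {Ω : Type*} [MeasurableSpace Ω] {μ : Measure Ω} {n m p q : ℕ}

theorem covMatrix_transpose (X : Ω → Fin n → ℝ) (Y : Ω → Fin m → ℝ) :
    (covMatrix μ X Y)ᵀ = covMatrix μ Y X := by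
  ext i j
  simp only [covMatrix, transpose_apply, mul_comm]

theorem integral_vecMul_apply {X : Ω → Fin n → ℝ} (hX : ∀ i, Integrable (fun ω => X ω i) μ)
    (A : Matrix (Fin n) (Fin p) ℝ) (j : Fin p) :
    ∫ ω, (X ω ᵥ* A) j ∂μ = ((fun i => ∫ ω, X ω i ∂μ) ᵥ* A) j := by
  simp only [vecMul, dotProduct]
  rw [integral_finsetSum _ fun i _ => (hX i).mul_const _]
  exact Finset.sum_congr rfl fun i _ => integral_mul_const _ _

theorem covMatrix_vecMul [IsFiniteMeasure μ] {X : Ω → Fin n → ℝ} {Y : Ω → Fin m → ℝ}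
    (hX : ∀ i, MemLp (fun ω => X ω i) 2 μ) (hY : ∀ k, MemLp (fun ω => Y ω k) 2 μ)
    (A : Matrix (Fin n) (Fin p) ℝ) (B : Matrix (Fin m) (Fin q) ℝ) :
    covMatrix μ (fun ω => X ω ᵥ* A) (fun ω => Y ω ᵥ* B) = Aᵀ * covMatrix μ X Y * B := by
  ext j l
  set Xc : Ω → Fin n → ℝ := fun ω => X ω - fun i => ∫ ω', X ω' i ∂μ
  set Yc : Ω → Fin m → ℝ := fun ω => Y ω - fun k => ∫ ω', Y ω' k ∂μ
  have hXc : ∀ i, MemLp (fun ω => Xc ω i) 2 μ := fun i => (hX i).sub (memLp_const _)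
  have hYc : ∀ k, MemLp (fun ω => Yc ω k) 2 μ := fun k => (hY k).sub (memLp_const _)
  have hprod : ∀ i k, Integrable (fun ω => Xc ω i * Yc ω k) μ :=
    fun i k => (hXc i).integrable_mul (hYc k)
  calc covMatrix μ (fun ω => X ω ᵥ* A) (fun ω => Y ω ᵥ* B) j l
      = ∫ ω, (Xc ω ᵥ* A) j * (Yc ω ᵥ* B) l ∂μ := by
        simp only [covMatrix, Xc, Yc, sub_vecMul, Pi.sub_apply,
          integral_vecMul_apply (fun i => (hX i).integrable one_le_two),
          integral_vecMul_apply (fun k => (hY k).integrable one_le_two)]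
    _ = ∫ ω, ∑ i, ∑ k, A i j * B k l * (Xc ω i * Yc ω k) ∂μ := by
        simp only [vecMul, dotProduct, Finset.sum_mul_sum]
        congr! 4 with ω i - k -
        ring
    _ = ∑ i, ∑ k, A i j * B k l * covMatrix μ X Y i k := by
        rw [integral_finsetSum _ fun i _ =>
          integrable_finsetSum _ fun k _ => (hprod i k).const_mul _]
        refine Finset.sum_congr rfl fun i _ => ?_
        rw [integral_finsetSum _ fun k _ => (hprod i k).const_mul _]
        exact Finset.sum_congr rfl fun k _ => integral_const_mul _ _
    _ = (Aᵀ * covMatrix μ X Y * B) j l := by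
        simp only [Matrix.mul_apply, transpose_apply, Finset.sum_mul]
        rw [Finset.sum_comm]
        simp only [mul_comm, mul_left_comm]

theorem covMatrix_ite_apply (S : Finset (Fin n)) (T : Finset (Fin m))
    (a b : Ω → Fin n → ℝ) (c e : Ω → Fin m → ℝ) (j : Fin n) (k : Fin m) :
    covMatrix μ (fun ω i => if i ∈ S then a ω i else b ω i)
        (fun ω i => if i ∈ T then c ω i else e ω i) j k =
      covMatrix μ (if j ∈ S then a else b) (if k ∈ T then c else e) j k := by
  by_cases hj : j ∈ S <;> by_cases hk : k ∈ T <;> simp only [covMatrix, hj, hk, if_true, if_false]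

theorem swapInv2_iff_offDiag_eq_zero {x y : Ω → Fin n → ℝ} {C D : Matrix (Fin n) (Fin n) ℝ}
    (hmean : ∀ i, ∫ ω, x ω i ∂μ = ∫ ω, y ω i ∂μ)
    (hxx : covMatrix μ x x = C) (hyy : covMatrix μ y y = C)
    (hxy : covMatrix μ x y = C - D) (hyx : covMatrix μ y x = C - D) :
    SwapInv2 μ x y ↔ ∀ j k, j ≠ k → D j k = 0 := by
  constructor
  · intro h j k hjk
    have hswap := congr_fun₂ (h {j}).2.2.1 j k
    rw [covMatrix_ite_apply] at hswap
    simp only [Finset.mem_singleton, hjk.symm, if_true, if_false, hyx, hxx,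
      Matrix.sub_apply] at hswap
    linarith
  · intro hD S
    refine ⟨fun i => ?_, fun i => ?_, ?_, ?_, ?_, ?_⟩
    · split_ifs <;> simp [hmean i]
    · split_ifs <;> simp [hmean i]
    all_goals
      ext j k
      rw [covMatrix_ite_apply]
      rcases eq_or_ne j k with rfl | hjk
      · split_ifs <;> simp [hxx, hyy, hxy, hyx]
      · split_ifs <;> simp [hxx, hyy, hxy, hyx, hD j k hjk]

end Covariance

theorem swap_invariance_of_linear_iff_diagonal_general
    {Ω : Type*} [MeasurableSpace Ω] (μ : Measure Ω) [IsProbabilityMeasure μ]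
    {d m : ℕ} (v vtil : Ω → Fin d → ℝ)
    (hv : ∀ i, MemLp (fun ω => v ω i) 2 μ)
    (hvtil : ∀ i, MemLp (fun ω => vtil ω i) 2 μ)
    (Sig : Matrix (Fin d) (Fin d) ℝ) (s : Fin d → ℝ)
    (hmean : ∀ i, ∫ ω, v ω i ∂μ = ∫ ω, vtil ω i ∂μ)
    (hcov : covMatrix μ v v = Sig) (hcovtil : covMatrix μ vtil vtil = Sig)
    (hcross : covMatrix μ v vtil = Sig - Matrix.diagonal s)
    (W : Matrix (Fin d) (Fin m) ℝ) :
    SwapInv2 μ (fun ω j => ∑ i, v ω i * W i j) (fun ω j => ∑ i, vtil ω i * W i j) ↔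
      ∀ j k, j ≠ k → (Wᵀ * Matrix.diagonal s * W) j k = 0 := by
  have hSig : Sigᵀ = Sig := by rw [← hcov, covMatrix_transpose]
  have hcross' : covMatrix μ vtil v = Sig - Matrix.diagonal s := by
    rw [← covMatrix_transpose, hcross, transpose_sub, hSig, diagonal_transpose]
  have hmeanW : ∀ j, ∫ ω, (v ω ᵥ* W) j ∂μ = ∫ ω, (vtil ω ᵥ* W) j ∂μ := fun j => by
    rw [integral_vecMul_apply (fun i => (hv i).integrable one_le_two),
      integral_vecMul_apply (fun i => (hvtil i).integrable one_le_two), funext hmean]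
  change SwapInv2 μ (fun ω => v ω ᵥ* W) (fun ω => vtil ω ᵥ* W) ↔ _
  refine swapInv2_iff_offDiag_eq_zero (C := Wᵀ * Sig * W) hmeanW ?_ ?_ ?_ ?_
  · rw [covMatrix_vecMul hv hv, hcov]
  · rw [covMatrix_vecMul hvtil hvtil, hcovtil]
  · rw [covMatrix_vecMul hv hvtil, hcross, Matrix.mul_sub, Matrix.sub_mul]
  · rw [covMatrix_vecMul hvtil hv, hcross', Matrix.mul_sub, Matrix.sub_mul]

/-- With `u = vW` and `util = vtilW`, the pair `(u, util)` is second-order swap-invariant iff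
`Wᵀ diag(s) W` is a diagonal matrix. -/
theorem swap_invariance_of_linear_iff_diagonal
    {Ω : Type*} [MeasurableSpace Ω] (μ : Measure Ω) [IsProbabilityMeasure μ]
    {d m : ℕ} (v vtil : Ω → Fin d → ℝ)
    (hv : ∀ i, MemLp (fun ω => v ω i) 2 μ)
    (hvtil : ∀ i, MemLp (fun ω => vtil ω i) 2 μ)
    (Sig : Matrix (Fin d) (Fin d) ℝ) (s : Fin d → ℝ)
    (hswap : SwapInv2 μ v vtil)
    (hmean : ∀ i, ∫ ω, v ω i ∂μ = ∫ ω, vtil ω i ∂μ)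
    (hcov : covMatrix μ v v = Sig) (hcovtil : covMatrix μ vtil vtil = Sig)
    (hcross : covMatrix μ v vtil = Sig - Matrix.diagonal s)
    (W : Matrix (Fin d) (Fin m) ℝ) :
    SwapInv2 μ (fun ω j => ∑ i, v ω i * W i j) (fun ω j => ∑ i, vtil ω i * W i j) ↔
      ∀ j k, j ≠ k → (Wᵀ * Matrix.diagonal s * W) j k = 0 :=
  swap_invariance_of_linear_iff_diagonal_general μ v vtil hv hvtil Sig s hmean hcov hcovtil hcross W
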